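/- Fix ε₀ ∈ (0,1), γ ∈ (0,1), p₀ ≤ p₁ ∈ [0,1] with p = p₁ - p₀, and let T = ⌈(1/γ)(ln(2(1+γ)²/(ε₀γ²)) + ln ln(2(1+γ)²/(ε₀γ²)))⌉. Let a = (1-γ)(1-p₀), b = (1-γ)(1-p₁), and define P = ∑_{j=1}^{T}(1-γ)^{j-1}γ((1-p₀)^j - (1-p₁)^j) + (1-γ)^T((1-p₀)^T - (1-p₁)^T). Then (1-ε₀)·γp/((p₀(1-γ)+γ)(p₁(1-γ)+γ)) ≤ P ≤ (1+ε₀)·γp/((p₀(1-γ)+γ)(p₁(1-γ)+γ)). -/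

import Mathlib

/-!
With `a = (1-γ)(1-p₀)`, `b = (1-γ)(1-p₁)`, `A = 1 - a`, `B = 1 - b`, summing the geometric series
gives `P = (γ (p₁ - p₀) + N) / (A B)` with `N = p₀ a^T B - p₁ b^T A = p₀ B (a^T - b^T) - γ (p₁ - p₀) b^T`.
The mean value bound `a^T - b^T ≤ T (a - b) (1-γ)^(T-1)` and `b^T ≤ (1-γ)^T` give
`-γ (p₁ - p₀) (1-γ)^T ≤ N ≤ T (p₁ - p₀) (1-γ)^T`, so it remains to make `T (1-γ)^T` small:
for `C = 2(1+γ)²/(ε₀γ²)` and `γT ≥ log C + log log C` we get `(1-γ)^T ≤ e^(-γT) ≤ 1/(C log C)`,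
whence `T (1-γ)^T ≤ 2/(γC) = ε₀γ/(1+γ)²`.
-/

open Finset Real

lemma one_sub_pow_le_exp_neg_mul {γ : ℝ} (hγ : γ ≤ 1) (n : ℕ) :
    (1 - γ) ^ n ≤ exp (-(γ * n)) :=
  calc (1 - γ) ^ n ≤ exp (-γ) ^ n := pow_le_pow_left₀ (by linarith) (one_sub_le_exp_neg γ) n
    _ = exp (-(γ * n)) := by rw [← exp_nat_mul]; ring_nf

lemma ceil_mul_one_sub_pow_le {γ C : ℝ} (hγ0 : 0 < γ) (hγ1 : γ ≤ 1) (hC : exp 1 < C) {T : ℕ}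
    (hT : T = ⌈(1 / γ) * (log C + log (log C))⌉₊) :
    1 ≤ T ∧ (T : ℝ) * (1 - γ) ^ T ≤ 2 / (γ * C) := by
  have hC0 : 0 < C := (exp_pos 1).trans hC
  have hlogC : 1 < log C := (lt_log_iff_exp_lt hC0).2 hC
  have hloglogC : 0 < log (log C) := log_pos hlogC
  set L := log C + log (log C) with hL
  have hγT : L ≤ γ * T := by
    have := Nat.le_ceil ((1 / γ) * L)
    rw [← hT, div_mul_eq_mul_div, one_mul, div_le_iff₀ hγ0] at this
    linarith
  have hTγ : γ * T ≤ L + 1 := by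
    have := Nat.ceil_lt_add_one (show 0 ≤ (1 / γ) * L by positivity)
    rw [← hT, div_mul_eq_mul_div, one_mul, ← sub_lt_iff_lt_add, lt_div_iff₀ hγ0] at this
    linarith
  have hT1 : 1 ≤ T := by
    have : (0 : ℝ) < T := pos_of_mul_pos_right (by linarith) hγ0.le
    exact_mod_cast this
  have hdecay : (1 - γ) ^ T ≤ 1 / (C * log C) :=
    calc (1 - γ) ^ T ≤ exp (-(γ * T)) := one_sub_pow_le_exp_neg_mul hγ1 T
      _ ≤ exp (-L) := exp_le_exp.2 (neg_le_neg hγT)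
      _ = 1 / (C * log C) := by
        rw [exp_neg, hL, exp_add, exp_log hC0, exp_log (by linarith), one_div]
  have hL1 : L + 1 ≤ 2 * log C := by linarith [log_le_sub_one_of_pos (by linarith : 0 < log C)]
  refine ⟨hT1, ?_⟩
  calc (T : ℝ) * (1 - γ) ^ T ≤ (2 * log C / γ) * (1 / (C * log C)) := by
        refine mul_le_mul ?_ hdecay (pow_nonneg (by linarith) T) (by positivity)
        rw [le_div_iff₀ hγ0]
        linarith
    _ = 2 / (γ * C) := by field_simp

lemma hardStop_horizon_spec {ε₀ γ : ℝ} (hε0 : 0 < ε₀) (hε1 : ε₀ < 1) (hγ0 : 0 < γ) (hγ1 : γ < 1)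
    {T : ℕ} (hT : T = ⌈(1 / γ) * (log (2 * (1 + γ) ^ 2 / (ε₀ * γ ^ 2)) +
      log (log (2 * (1 + γ) ^ 2 / (ε₀ * γ ^ 2))))⌉₊) :
    1 ≤ T ∧ (T : ℝ) * (1 - γ) ^ T ≤ ε₀ * γ / (1 + γ) ^ 2 := by
  have hC : exp 1 < 2 * (1 + γ) ^ 2 / (ε₀ * γ ^ 2) := by
    rw [lt_div_iff₀ (by positivity)]
    nlinarith [exp_one_lt_d9, mul_pos hε0 (mul_pos hγ0 hγ0)]
  obtain ⟨hT1, hdecay⟩ := ceil_mul_one_sub_pow_le hγ0 hγ1.le hC hT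
  refine ⟨hT1, hdecay.trans_eq ?_⟩
  field_simp

lemma hardStop_sum_pow_eq {γ q : ℝ} (hA : q * (1 - γ) + γ ≠ 0) (T : ℕ) :
    ∑ j ∈ range T, (1 - γ) ^ j * γ * (1 - q) ^ (j + 1) + (1 - γ) ^ T * (1 - q) ^ T =
      (γ * (1 - q) + q * ((1 - γ) * (1 - q)) ^ T) / (q * (1 - γ) + γ) := by
  have hne : (1 - γ) * (1 - q) ≠ 1 := fun h ↦ hA (by linear_combination -h)
  have hterm : ∀ j : ℕ, (1 - γ) ^ j * γ * (1 - q) ^ (j + 1) = γ * (1 - q) * ((1 - γ) * (1 - q)) ^ j :=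
    fun j ↦ by rw [mul_pow, pow_succ]; ring
  have hden : (1 - γ) * (1 - q) - 1 = -(q * (1 - γ) + γ) := by ring
  simp_rw [hterm, ← mul_sum, geom_sum_eq hne, ← mul_pow, hden]
  field_simp
  ring

lemma pow_sub_pow_le_of_le {a b c : ℝ} (hb : 0 ≤ b) (hba : b ≤ a) (hac : a ≤ c) (n : ℕ) :
    a ^ n - b ^ n ≤ n * (a - b) * c ^ (n - 1) := by
  have ha : 0 ≤ a := hb.trans hba
  calc a ^ n - b ^ n ≤ |a ^ n - b ^ n| := le_abs_self _
    _ ≤ |a - b| * n * max |a| |b| ^ (n - 1) := abs_pow_sub_pow_le a b n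
    _ = n * (a - b) * a ^ (n - 1) := by
      rw [abs_of_nonneg (sub_nonneg.2 hba), abs_of_nonneg ha, abs_of_nonneg hb,
        max_eq_left hba]
      ring
    _ ≤ n * (a - b) * c ^ (n - 1) := by
      gcongr

def hardStopError (γ p₀ p₁ : ℝ) (T : ℕ) : ℝ :=
  p₀ * ((1 - γ) * (1 - p₀)) ^ T * (p₁ * (1 - γ) + γ) -
    p₁ * ((1 - γ) * (1 - p₁)) ^ T * (p₀ * (1 - γ) + γ)

lemma hardStop_prob_eq {γ p₀ p₁ : ℝ} (hA : p₀ * (1 - γ) + γ ≠ 0) (hB : p₁ * (1 - γ) + γ ≠ 0)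
    (T : ℕ) :
    ∑ j ∈ range T, (1 - γ) ^ j * γ * ((1 - p₀) ^ (j + 1) - (1 - p₁) ^ (j + 1)) +
        (1 - γ) ^ T * ((1 - p₀) ^ T - (1 - p₁) ^ T) =
      γ * (p₁ - p₀) / ((p₀ * (1 - γ) + γ) * (p₁ * (1 - γ) + γ)) +
        hardStopError γ p₀ p₁ T / ((p₀ * (1 - γ) + γ) * (p₁ * (1 - γ) + γ)) := by
  have h₀ := hardStop_sum_pow_eq hA T
  have h₁ := hardStop_sum_pow_eq hB T
  calc _ = (∑ j ∈ range T, (1 - γ) ^ j * γ * (1 - p₀) ^ (j + 1) + (1 - γ) ^ T * (1 - p₀) ^ T) -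
        (∑ j ∈ range T, (1 - γ) ^ j * γ * (1 - p₁) ^ (j + 1) + (1 - γ) ^ T * (1 - p₁) ^ T) := by
        simp only [mul_sub, sum_sub_distrib]
        ring
    _ = _ := by
        rw [h₀, h₁, hardStopError, div_sub_div _ _ hA hB, ← add_div]
        ring

lemma hardStopError_eq (γ p₀ p₁ : ℝ) (T : ℕ) :
    hardStopError γ p₀ p₁ T =
      p₀ * (p₁ * (1 - γ) + γ) * (((1 - γ) * (1 - p₀)) ^ T - ((1 - γ) * (1 - p₁)) ^ T) -
        γ * (p₁ - p₀) * ((1 - γ) * (1 - p₁)) ^ T := by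
  rw [hardStopError]
  ring

lemma hardStop_ratio_chain {γ p₀ p₁ : ℝ} (hγ1 : γ ≤ 1) (h0 : 0 ≤ p₀) (h01 : p₀ ≤ p₁)
    (h1 : p₁ ≤ 1) :
    0 ≤ (1 - γ) * (1 - p₁) ∧ (1 - γ) * (1 - p₁) ≤ (1 - γ) * (1 - p₀) ∧
      (1 - γ) * (1 - p₀) ≤ 1 - γ :=
  ⟨mul_nonneg (by linarith) (by linarith), by gcongr,
    mul_le_of_le_one_right (by linarith) (by linarith)⟩

section error

variable {γ p₀ p₁ : ℝ} (hγ0 : 0 ≤ γ) (hγ1 : γ ≤ 1) (h0 : 0 ≤ p₀) (h01 : p₀ ≤ p₁) (h1 : p₁ ≤ 1)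
include hγ0 hγ1 h0 h01 h1

lemma hardStopError_le {T : ℕ} (hT : 1 ≤ T) :
    hardStopError γ p₀ p₁ T ≤ T * (p₁ - p₀) * (1 - γ) ^ T := by
  obtain ⟨hb, hba, ha⟩ := hardStop_ratio_chain hγ1 h0 h01 h1
  have hgap : 0 ≤ ((1 - γ) * (1 - p₀)) ^ T - ((1 - γ) * (1 - p₁)) ^ T :=
    sub_nonneg.2 (pow_le_pow_left₀ hb hba T)
  have hcoef : p₀ * (p₁ * (1 - γ) + γ) ≤ 1 :=
    mul_le_one₀ (by linarith) (by nlinarith) (by nlinarith)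
  have hdiff : ((1 - γ) * (1 - p₀)) ^ T - ((1 - γ) * (1 - p₁)) ^ T ≤
      T * (p₁ - p₀) * (1 - γ) ^ T := by
    obtain ⟨n, rfl⟩ := Nat.exists_eq_add_of_le' hT
    calc _ ≤ (n + 1 : ℕ) * ((1 - γ) * (1 - p₀) - (1 - γ) * (1 - p₁)) * (1 - γ) ^ n :=
          pow_sub_pow_le_of_le hb hba ha (n + 1)
      _ = _ := by ring
  rw [hardStopError_eq]
  nlinarith [mul_le_of_le_one_left hgap hcoef, pow_nonneg hb T, mul_nonneg hγ0 (sub_nonneg.2 h01)]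

lemma neg_le_hardStopError (T : ℕ) :
    -(γ * (p₁ - p₀) * (1 - γ) ^ T) ≤ hardStopError γ p₀ p₁ T := by
  obtain ⟨hb, hba, ha⟩ := hardStop_ratio_chain hγ1 h0 h01 h1
  have hgap : 0 ≤ ((1 - γ) * (1 - p₀)) ^ T - ((1 - γ) * (1 - p₁)) ^ T :=
    sub_nonneg.2 (pow_le_pow_left₀ hb hba T)
  have hbT : ((1 - γ) * (1 - p₁)) ^ T ≤ (1 - γ) ^ T := pow_le_pow_left₀ hb (hba.trans ha) T
  have hcoef : 0 ≤ p₀ * (p₁ * (1 - γ) + γ) := mul_nonneg h0 (by nlinarith)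
  rw [hardStopError_eq]
  nlinarith [mul_nonneg hcoef hgap, mul_le_mul_of_nonneg_left hbT
    (mul_nonneg hγ0 (sub_nonneg.2 h01))]

end error

/-- Fix `ε₀, γ ∈ (0,1)`, `0 ≤ p₀ ≤ p₁ ≤ 1` with `p = p₁ - p₀`, and let
`T = ⌈(1/γ)(ln(2(1+γ)²/(ε₀γ²)) + ln ln(2(1+γ)²/(ε₀γ²)))⌉`.  Then the probability
`P = ∑_{j=1}^{T}(1-γ)^{j-1}γ((1-p₀)^j - (1-p₁)^j) + (1-γ)^T((1-p₀)^T - (1-p₁)^T)`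
that the hard-stopping best-of algorithm outputs `(x,q)` satisfies
`(1-ε₀)·γp/((p₀(1-γ)+γ)(p₁(1-γ)+γ)) ≤ P ≤ (1+ε₀)·γp/((p₀(1-γ)+γ)(p₁(1-γ)+γ))`. -/
theorem stmt19 (ε₀ γ p₀ p₁ : ℝ)
    (hε₀ : ε₀ ∈ Set.Ioo (0 : ℝ) 1) (hγ : γ ∈ Set.Ioo (0 : ℝ) 1)
    (h0 : 0 ≤ p₀) (h01 : p₀ ≤ p₁) (h1 : p₁ ≤ 1)
    (T : ℕ)
    (hT : T = ⌈(1 / γ) * (Real.log (2 * (1 + γ) ^ 2 / (ε₀ * γ ^ 2)) +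
      Real.log (Real.log (2 * (1 + γ) ^ 2 / (ε₀ * γ ^ 2))))⌉₊) :
    (1 - ε₀) * (γ * (p₁ - p₀) / ((p₀ * (1 - γ) + γ) * (p₁ * (1 - γ) + γ))) ≤
      (∑ j ∈ Finset.range T, (1 - γ) ^ j * γ * ((1 - p₀) ^ (j + 1) - (1 - p₁) ^ (j + 1))) +
        (1 - γ) ^ T * ((1 - p₀) ^ T - (1 - p₁) ^ T) ∧
    (∑ j ∈ Finset.range T, (1 - γ) ^ j * γ * ((1 - p₀) ^ (j + 1) - (1 - p₁) ^ (j + 1))) +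
        (1 - γ) ^ T * ((1 - p₀) ^ T - (1 - p₁) ^ T) ≤
      (1 + ε₀) * (γ * (p₁ - p₀) / ((p₀ * (1 - γ) + γ) * (p₁ * (1 - γ) + γ))) := by
  obtain ⟨hε0, hε1⟩ := hε₀
  obtain ⟨hγ0, hγ1⟩ := hγ
  obtain ⟨hT1, hdecay⟩ := hardStop_horizon_spec hε0 hε1 hγ0 hγ1 hT
  have hTdecay : T * (1 - γ) ^ T ≤ ε₀ * γ :=
    hdecay.trans (div_le_self (by positivity) (one_le_pow₀ (by linarith)))
  have hdecay_le : (1 - γ) ^ T ≤ ε₀ := by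
    have : (1 - γ) ^ T ≤ T * (1 - γ) ^ T :=
      le_mul_of_one_le_left (pow_nonneg (by linarith) T) (by exact_mod_cast hT1)
    nlinarith
  have hgp : 0 ≤ γ * (p₁ - p₀) := mul_nonneg hγ0.le (by linarith)
  have hN : |hardStopError γ p₀ p₁ T| ≤ ε₀ * (γ * (p₁ - p₀)) := by
    refine abs_le.2 ⟨?_, ?_⟩
    · calc -(ε₀ * (γ * (p₁ - p₀))) ≤ -(γ * (p₁ - p₀) * (1 - γ) ^ T) := by nlinarith
        _ ≤ _ := neg_le_hardStopError hγ0.le hγ1.le h0 h01 h1 T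
    · calc _ ≤ T * (p₁ - p₀) * (1 - γ) ^ T := hardStopError_le hγ0.le hγ1.le h0 h01 h1 hT1
        _ ≤ ε₀ * (γ * (p₁ - p₀)) := by nlinarith
  have hAB : 0 < (p₀ * (1 - γ) + γ) * (p₁ * (1 - γ) + γ) := by
    apply mul_pos <;> nlinarith
  have hNdiv : |hardStopError γ p₀ p₁ T / ((p₀ * (1 - γ) + γ) * (p₁ * (1 - γ) + γ))| ≤
      ε₀ * (γ * (p₁ - p₀) / ((p₀ * (1 - γ) + γ) * (p₁ * (1 - γ) + γ))) := by
    rw [abs_div, abs_of_pos hAB, ← mul_div_assoc]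
    exact div_le_div_of_nonneg_right hN hAB.le
  rw [hardStop_prob_eq (by nlinarith) (by nlinarith)]
  constructor <;> linarith [abs_le.1 hNdiv]
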